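/- arXiv:1805.05035 — 6 statements merged into one kernel-verified Lean document; each statement's English description precedes it below -/
import Mathlib

section
/- Let K ⊂ ℝ^d be compact and g : K → ℝ^n Lebesgue integrable. For every ε > 0 and N ∈ ℕ, the set of continuous functions w : K → ℝ such that meas{x ∈ K | w(x) = λ·g(x)} < ε for all λ ∈ [-N,N]^n is open in C(K,ℝ) with the sup norm. -/
open MeasureTheory

/-- Openness of the set of continuous functions `w` on a compact `K ⊆ ℝ^d` such that
`meas {x ∈ K | w x = λ · g x} < ε` for all `λ ∈ [-N, N]^n`. -/
theorem stmt0 (d n : ℕ) (K : Set (Fin d → ℝ)) (hK : IsCompact K)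
    (g : (Fin d → ℝ) → Fin n → ℝ) (hg : IntegrableOn g K)
    (ε : ℝ) (hε : 0 < ε) (N : ℕ) :
    IsOpen {w : C(K, ℝ) |
      ∀ lam : Fin n → ℝ, (∀ i, lam i ∈ Set.Icc (-(N : ℝ)) N) →
        volume (Subtype.val '' {x : K | w x = ∑ i, lam i * g x.1 i}) < ENNReal.ofReal ε} := by
  classical
  have hKm : MeasurableSet K := hK.measurableSet
  haveI : CompactSpace K := isCompact_iff_compactSpace.mp hK
  set μ : Measure K := volume.comap Subtype.val with hμdef
  have himg : ∀ A : Set K, volume (Subtype.val '' A) = μ A := fun A =>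
    ((MeasurableEmbedding.subtype_coe hKm).comap_apply volume A).symm
  haveI : IsFiniteMeasure μ := by
    constructor
    rw [← himg, Set.image_univ, Subtype.range_coe]
    exact hK.measure_lt_top
  -- measurable representative of g on the subtype
  have hGsm : AEStronglyMeasurable (fun x : K => g x.1) μ := by
    have h1 := hg.1
    rw [← Subtype.range_coe (s := K), ← (MeasurableEmbedding.subtype_coe hKm).map_comap volume] at h1
    exact h1.comp_aemeasurable measurable_subtype_coe.aemeasurable
  obtain ⟨G', hG'sm, hae⟩ := hGsm
  have hG'm : Measurable G' := hG'sm.measurable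
  have hcongr : ∀ (w' : C(K, ℝ)) (lam : Fin n → ℝ),
      μ {x : K | w' x = ∑ i, lam i * g x.1 i} = μ {x : K | w' x = ∑ i, lam i * G' x i} := by
    intro w' lam
    apply measure_congr
    rw [Filter.eventuallyEq_set]
    filter_upwards [hae] with x hx
    simp only [Set.mem_setOf_eq, hx]
  rw [Metric.isOpen_iff]
  intro w hw
  simp only [Set.mem_setOf_eq] at hw
  have hw' : ∀ lam : Fin n → ℝ, (∀ i, lam i ∈ Set.Icc (-(N : ℝ)) N) →
      μ {x : K | w x = ∑ i, lam i * G' x i} < ENNReal.ofReal ε := by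
    intro lam h
    have := hw lam h
    rwa [himg, hcongr w lam] at this
  -- key: small measure for thickened level sets
  have key : ∀ lam : Fin n → ℝ, (∀ i, lam i ∈ Set.Icc (-(N : ℝ)) N) →
      ∃ δ > (0:ℝ), μ {x : K | |w x - ∑ i, lam i * G' x i| ≤ δ * (1 + ∑ i, |G' x i|)}
        < ENNReal.ofReal ε := by
    intro lam hlam
    set s : ℕ → Set K := fun k =>
      {x : K | |w x - ∑ i, lam i * G' x i| ≤ (1 / (k + 1) : ℝ) * (1 + ∑ i, |G' x i|)} with hs
    have hwm : Measurable fun x : K => w x := (map_continuous w).measurable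
    have hsum : Measurable fun x : K => ∑ i, lam i * G' x i := by
      apply Finset.measurable_sum
      intro i _
      exact (measurable_const.mul ((measurable_pi_apply i).comp hG'm))
    have habs : Measurable fun x : K => 1 + ∑ i, |G' x i| := by
      apply Measurable.const_add
      apply Finset.measurable_sum
      intro i _
      exact ((measurable_pi_apply i).comp hG'm).abs
    have hmeas : ∀ k, NullMeasurableSet (s k) μ := by
      intro k
      exact (measurableSet_le ((hwm.sub hsum).abs) (habs.const_mul _)).nullMeasurableSet
    have hanti : Antitone s := by
      intro k m hkm x hx
      simp only [hs, Set.mem_setOf_eq] at hx ⊢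
      refine hx.trans ?_
      have hc : (0:ℝ) ≤ 1 + ∑ i, |G' x i| := by positivity
      apply mul_le_mul_of_nonneg_right _ hc
      apply one_div_le_one_div_of_le (by positivity)
      have : (k:ℝ) ≤ m := Nat.cast_le.mpr hkm
      linarith
    have hint : (⋂ k, s k) = {x : K | w x = ∑ i, lam i * G' x i} := by
      ext x
      simp only [Set.mem_iInter, hs, Set.mem_setOf_eq]
      constructor
      · intro h
        have hc : (0:ℝ) < 1 + ∑ i, |G' x i| := by positivity
        have htend : Filter.Tendsto (fun k : ℕ => (1 / (k + 1) : ℝ) * (1 + ∑ i, |G' x i|))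
            Filter.atTop (nhds 0) := by
          simpa using tendsto_one_div_add_atTop_nhds_zero_nat.mul_const (1 + ∑ i, |G' x i|)
        have hle : |w x - ∑ i, lam i * G' x i| ≤ 0 := ge_of_tendsto' htend h
        have := abs_nonneg (w x - ∑ i, lam i * G' x i)
        have : |w x - ∑ i, lam i * G' x i| = 0 := le_antisymm hle this
        linarith [abs_eq_zero.mp this, sub_eq_zero.mp (abs_eq_zero.mp this)]
      · intro h k
        rw [h, sub_self, abs_zero]
        positivity
    have htd := tendsto_measure_iInter_atTop hmeas hanti ⟨0, measure_ne_top μ _⟩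
    rw [hint] at htd
    have hev : ∀ᶠ k in Filter.atTop, (μ ∘ s) k < ENNReal.ofReal ε :=
      htd.eventually_lt_const (hw' lam hlam)
    obtain ⟨k, hk⟩ := hev.exists
    exact ⟨1 / (k + 1), by positivity, hk⟩
  -- compactness of the cube
  set C : Set (Fin n → ℝ) := {lam | ∀ i, lam i ∈ Set.Icc (-(N : ℝ)) N} with hC
  have hCcomp : IsCompact C := by
    have : C = Set.univ.pi fun _ : Fin n => Set.Icc (-(N : ℝ)) N := by
      ext lam; simp [hC, Set.mem_pi, Pi.le_def, forall_and]
    rw [this]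
    exact isCompact_univ_pi fun _ => isCompact_Icc
  choose δ hδpos hδ using fun lam : C => key lam.1 lam.2
  have hcover : C ⊆ ⋃ lam : C, Metric.ball (lam : Fin n → ℝ) (δ lam) := by
    intro lam hlam
    exact Set.mem_iUnion.mpr ⟨⟨lam, hlam⟩, Metric.mem_ball_self (hδpos _)⟩
  obtain ⟨t, ht⟩ := hCcomp.elim_finite_subcover _ (fun lam => Metric.isOpen_ball) hcover
  have htne : t.Nonempty := by
    have h0 : (0 : Fin n → ℝ) ∈ C := by
      intro i
      simp only [Pi.zero_apply, Set.mem_Icc]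
      constructor <;> [simp; simp]
    obtain ⟨lam, hmem⟩ := Set.mem_iUnion₂.mp (ht h0)
    exact ⟨lam, hmem.1⟩
  set r : ℝ := t.inf' htne fun lam => δ lam with hr
  have hrpos : 0 < r := by
    rw [hr, Finset.lt_inf'_iff]
    exact fun lam _ => hδpos lam
  refine ⟨r, hrpos, ?_⟩
  intro w' hw'ball
  simp only [Metric.mem_ball] at hw'ball
  intro lam' hlam'
  obtain ⟨lam0, hlamt, hball⟩ := Set.mem_iUnion₂.mp (ht hlam')
  rw [himg, hcongr]
  refine lt_of_le_of_lt (measure_mono ?_) (hδ lam0)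
  intro x hx
  simp only [Set.mem_setOf_eq] at hx ⊢
  have h1 : |w x - w' x| ≤ δ lam0 := by
    calc |w x - w' x| = dist (w x) (w' x) := (Real.dist_eq _ _).symm
      _ ≤ dist w w' := ContinuousMap.dist_apply_le_dist x
      _ = dist w' w := dist_comm _ _
      _ ≤ r := le_of_lt hw'ball
      _ ≤ δ lam0 := Finset.inf'_le _ hlamt
  have h2 : |(∑ i, lam' i * G' x i) - ∑ i, lam0.1 i * G' x i| ≤ δ lam0 * ∑ i, |G' x i| := by
    have heq : (∑ i, lam' i * G' x i) - ∑ i, lam0.1 i * G' x i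
        = ∑ i, (lam' i - lam0.1 i) * G' x i := by
      rw [← Finset.sum_sub_distrib]
      apply Finset.sum_congr rfl
      intro i _; ring
    rw [heq]
    calc |∑ i, (lam' i - lam0.1 i) * G' x i| ≤ ∑ i, |(lam' i - lam0.1 i) * G' x i| :=
          Finset.abs_sum_le_sum_abs _ _
      _ ≤ ∑ i, δ lam0 * |G' x i| := by
          apply Finset.sum_le_sum
          intro i _
          rw [abs_mul]
          apply mul_le_mul_of_nonneg_right _ (abs_nonneg _)
          calc |lam' i - lam0.1 i| = dist (lam' i) (lam0.1 i) := (Real.dist_eq _ _).symm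
            _ ≤ dist lam' (lam0 : Fin n → ℝ) := dist_le_pi_dist _ _ i
            _ ≤ δ lam0 := le_of_lt (Metric.mem_ball.mp hball)
      _ = δ lam0 * ∑ i, |G' x i| := by rw [Finset.mul_sum]
  calc |w x - ∑ i, lam0.1 i * G' x i|
      = |(w x - w' x) + ((∑ i, lam' i * G' x i) - ∑ i, lam0.1 i * G' x i)| := by
        rw [hx]; ring_nf
    _ ≤ |w x - w' x| + |(∑ i, lam' i * G' x i) - ∑ i, lam0.1 i * G' x i| := abs_add_le _ _
    _ ≤ δ lam0 + δ lam0 * ∑ i, |G' x i| := add_le_add h1 h2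
    _ = δ lam0 * (1 + ∑ i, |G' x i|) := by ring
end

section
/- Let K ⊂ ℝ^d be compact, f₁,…,f_m : K → ℝ^n Lebesgue integrable, α ∈ ℝ^n, and suppose the set 𝒜_α = {θ : K → Δ_m measurable | Σᵢ ∫_K θᵢ(x) fᵢ(x) dx = α} is nonempty, where Δ_m is the standard simplex in ℝ^m. Then for every continuous v : K → ℝ^m, the problem of minimizing ∫_K θ(x)·v(x) dx over θ ∈ 𝒜_α admits at least one solution. -/
/-!
Take a minimizing sequence `θₖ` in `𝒜_α`. Its coordinates are bounded in `L²(K)`, so by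
Banach–Alaoglu and the Riesz representation they converge weakly along an ultrafilter finer than
`atTop`. Testing against indicators shows that the limit `θ` is again simplex-valued almost
everywhere, and since the `θₖ` are uniformly bounded, convergence of set integrals upgrades to
convergence of `∫ θₖ • g` for every integrable `g` (simple functions are dense in `L¹`). Hence
both the linear constraint and the objective pass to the limit, so `θ` is admissible and
attains the infimum.
-/

open MeasureTheory Filter Topology ENNReal NNReal

theorem exists_isMinOn_of_tendsto_ultrafilter {α : Type*} {S : Set α} {J : α → ℝ}
    (hne : S.Nonempty) (hbdd : BddBelow (J '' S))
    (hlim : ∀ θs : ℕ → α, (∀ k, θs k ∈ S) → ∀ 𝒰 : Ultrafilter ℕ,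
      ∃ θ ∈ S, Tendsto (fun k => J (θs k)) 𝒰 (𝓝 (J θ))) :
    ∃ θ ∈ S, IsMinOn J S θ := by
  obtain ⟨u, -, hu, huS⟩ := exists_seq_tendsto_sInf (hne.image J) hbdd
  choose θs hθsS hθsu using huS
  obtain ⟨θ, hθS, hθ⟩ := hlim θs hθsS (Ultrafilter.of atTop)
  have hJθ : J θ = sInf (J '' S) := tendsto_nhds_unique hθ <|
    (hu.mono_left (Ultrafilter.of_le atTop)).congr fun k => (hθsu k).symm
  exact ⟨θ, hθS, fun θ' hθ' => hJθ ▸ csInf_le hbdd (Set.mem_image_of_mem J hθ')⟩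

theorem exists_tendsto_inner_of_norm_le {ι E : Type*} [NormedAddCommGroup E]
    [InnerProductSpace ℝ E] [CompleteSpace E] (𝒰 : Ultrafilter ι) {x : ι → E} {R : ℝ}
    (hx : ∀ k, ‖x k‖ ≤ R) :
    ∃ p : E, ∀ g, Tendsto (fun k => inner ℝ (x k) g) 𝒰 (𝓝 (inner ℝ p g)) := by
  set a : ι → WeakDual ℝ E := fun k => StrongDual.toWeakDual (InnerProductSpace.toDual ℝ E (x k))
  obtain ⟨ℓ, -, hℓ⟩ := (WeakDual.isCompact_closedBall (0 : StrongDual ℝ E) R).ultrafilter_le_nhds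
    (𝒰.map a) (le_principal_iff.mpr <| Ultrafilter.mem_map.mpr <|
      univ_mem' fun k => by simpa [a] using hx k)
  refine ⟨(InnerProductSpace.toDual ℝ E).symm (WeakDual.toStrongDual ℓ), fun g => ?_⟩
  have := ((WeakDual.eval_continuous g).tendsto ℓ).comp (Ultrafilter.coe_map a 𝒰 ▸ hℓ)
  simpa [a, Function.comp_def] using this

variable {ι κ X E : Type*} [MeasurableSpace X] {μ : Measure X}
  [NormedAddCommGroup E] [NormedSpace ℝ E]

theorem exists_tendsto_setIntegral_of_ae_bound [IsFiniteMeasure μ] (𝒰 : Ultrafilter ι)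
    {φs : ι → X → ℝ} (hφs : ∀ k, AEStronglyMeasurable (φs k) μ) {C : ℝ}
    (hC : ∀ k, ∀ᵐ x ∂μ, ‖φs k x‖ ≤ C) :
    ∃ φ : X → ℝ, Measurable φ ∧ Integrable φ μ ∧ ∀ s, MeasurableSet s →
      Tendsto (fun k => ∫ x in s, φs k x ∂μ) 𝒰 (𝓝 (∫ x in s, φ x ∂μ)) := by
  have hL2 : ∀ k, MemLp (φs k) 2 μ := fun k => .of_bound (hφs k) C (hC k)
  obtain ⟨p, hp⟩ := exists_tendsto_inner_of_norm_le 𝒰 (x := fun k => (hL2 k).toLp)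
    fun k => Lp.norm_le_of_ae_bound (C := max C 0) (le_max_right _ _) <|
      ((hL2 k).coeFn_toLp.and (hC k)).mono fun x hx => by
        rw [hx.1]; exact hx.2.trans (le_max_left _ _)
  have hpm := (Lp.aestronglyMeasurable p).aemeasurable
  refine ⟨hpm.mk p, hpm.measurable_mk, ((Lp.memLp p).integrable one_le_two).congr hpm.ae_eq_mk,
    fun s hs => ?_⟩
  have hμs : μ s ≠ ∞ := measure_ne_top μ s
  have hinner (φ : Lp ℝ 2 μ) : inner ℝ φ (indicatorConstLp 2 hs hμs 1) = ∫ x in s, φ x ∂μ := by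
    rw [real_inner_comm, L2.inner_indicatorConstLp_one]
  convert hp (indicatorConstLp 2 hs hμs 1) using 2 with k
  · rw [hinner]; exact setIntegral_congr_ae hs ((hL2 k).coeFn_toLp.mono fun x hx _ => hx.symm)
  · rw [hinner]; exact setIntegral_congr_ae hs (hpm.ae_eq_mk.mono fun x hx _ => hx.symm)

theorem lipschitzWith_integral_smul {φ : X → ℝ} {C : ℝ≥0} (hφ : AEStronglyMeasurable φ μ)
    (hC : ∀ᵐ x ∂μ, ‖φ x‖ ≤ C) :
    LipschitzWith C (fun u : X →₁[μ] E => ∫ x, φ x • u x ∂μ) := by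
  refine LipschitzWith.of_dist_le_mul fun u w => ?_
  have hint (u : X →₁[μ] E) : Integrable (fun x => φ x • u x) μ :=
    (L1.integrable_coeFn u).bdd_smul C hφ hC
  rw [dist_eq_norm, ← integral_sub (hint u) (hint w), dist_eq_norm, L1.norm_eq_integral_norm,
    ← integral_const_mul]
  refine norm_integral_le_of_norm_le ((L1.integrable_coeFn (u - w)).norm.const_mul _) ?_
  filter_upwards [hC, Lp.coeFn_sub u w] with x hx hsub
  rw [hsub, Pi.sub_apply, ← smul_sub, norm_smul]
  exact mul_le_mul_of_nonneg_right hx (norm_nonneg _)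

theorem tendsto_integral_smul_of_tendsto_setIntegral [CompleteSpace E] {l : Filter ι}
    {φs : ι → X → ℝ} {φ : X → ℝ} {C : ℝ≥0}
    (hφs : ∀ k, AEStronglyMeasurable (φs k) μ) (hφsC : ∀ k, ∀ᵐ x ∂μ, ‖φs k x‖ ≤ C)
    (hφ : AEStronglyMeasurable φ μ) (hφC : ∀ᵐ x ∂μ, ‖φ x‖ ≤ C)
    (hlim : ∀ s, MeasurableSet s → μ s < ∞ →
      Tendsto (fun k => ∫ x in s, φs k x ∂μ) l (𝓝 (∫ x in s, φ x ∂μ)))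
    {g : X → E} (hg : Integrable g μ) :
    Tendsto (fun k => ∫ x, φs k x • g x ∂μ) l (𝓝 (∫ x, φ x • g x ∂μ)) := by
  refine Integrable.induction
    (fun g => Tendsto (fun k => ∫ x, φs k x • g x ∂μ) l (𝓝 (∫ x, φ x • g x ∂μ))) ?_ ?_ ?_ ?_ hg
  · intro c s hs hμs
    have hind (ψ : X → ℝ) :
        ∫ x, ψ x • s.indicator (fun _ => c) x ∂μ = (∫ x in s, ψ x ∂μ) • c := by
      rw [← Set.indicator_smul, integral_indicator hs, integral_smul_const]
    simpa only [hind] using (hlim s hs hμs).smul_const c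
  · intro f g _ hf hg hPf hPg
    have hadd (ψ : X → ℝ) (hψ : AEStronglyMeasurable ψ μ) (hψC : ∀ᵐ x ∂μ, ‖ψ x‖ ≤ C) :
        ∫ x, ψ x • (f + g) x ∂μ = ∫ x, ψ x • f x ∂μ + ∫ x, ψ x • g x ∂μ := by
      simp_rw [Pi.add_apply, smul_add]
      exact integral_add (hf.bdd_smul C hψ hψC) (hg.bdd_smul C hψ hψC)
    simpa only [hadd _ (hφs _) (hφsC _), hadd φ hφ hφC] using hPf.add hPg
  · exact (LipschitzWith.uniformEquicontinuous _ C fun k =>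
      lipschitzWith_integral_smul (hφs k) (hφsC k)).equicontinuous.isClosed_setOfPred_tendsto
      (lipschitzWith_integral_smul hφ hφC).continuous
  · intro f g hfg _ hPf
    have hcongr (ψ : X → ℝ) : ∫ x, ψ x • f x ∂μ = ∫ x, ψ x • g x ∂μ :=
      integral_congr_ae (hfg.mono fun x hx => by simp only [hx])
    simpa only [hcongr] using hPf

theorem norm_apply_le_one_of_mem_stdSimplex [Fintype κ] {θ : κ → ℝ} (hθ : θ ∈ stdSimplex ℝ κ)
    (i : κ) : ‖θ i‖ ≤ 1 :=
  (norm_le_pi_norm θ i).trans (by simpa using stdSimplex_subset_closedBall hθ)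

theorem sum_setIntegral_eq_of_ae_mem_stdSimplex [Fintype κ] {θ : X → κ → ℝ}
    (hθ : ∀ i, Integrable (fun x => θ x i) μ) (hΔ : ∀ᵐ x ∂μ, θ x ∈ stdSimplex ℝ κ)
    (s : Set X) : ∑ i, ∫ x in s, θ x i ∂μ = μ.real s := by
  rw [← integral_finsetSum _ fun i _ => (hθ i).integrableOn,
    integral_congr_ae (g := fun _ => (1 : ℝ)) (ae_restrict_of_ae (hΔ.mono fun x hx => hx.2)),
    setIntegral_const, smul_eq_mul, mul_one]

theorem ae_mem_stdSimplex_of_tendsto_setIntegral [Fintype κ] [SigmaFinite μ] {l : Filter ι}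
    [l.NeBot] {θs : ι → X → κ → ℝ} {θ : X → κ → ℝ}
    (hθs : ∀ k i, Integrable (fun x => θs k x i) μ) (hΔs : ∀ k, ∀ᵐ x ∂μ, θs k x ∈ stdSimplex ℝ κ)
    (hθ : ∀ i, Integrable (fun x => θ x i) μ)
    (hlim : ∀ i s, MeasurableSet s → μ s < ∞ →
      Tendsto (fun k => ∫ x in s, θs k x i ∂μ) l (𝓝 (∫ x in s, θ x i ∂μ))) :
    ∀ᵐ x ∂μ, θ x ∈ stdSimplex ℝ κ := by
  have hnonneg (i : κ) : 0 ≤ᵐ[μ] fun x => θ x i :=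
    ae_nonneg_of_forall_setIntegral_nonneg (hθ i) fun s hs hμs =>
      ge_of_tendsto (hlim i s hs hμs) <| .of_forall fun k =>
        integral_nonneg_of_ae <| ae_restrict_of_ae <| (hΔs k).mono fun x hx => hx.1 i
  have hsum : (fun x => ∑ i, θ x i) =ᵐ[μ] fun _ => 1 := by
    refine ae_eq_of_forall_setIntegral_eq_of_sigmaFinite
      (fun s _ _ => (integrable_finsetSum _ fun i _ => hθ i).integrableOn)
      (fun s _ hμs => integrableOn_const hμs.ne) fun s hs hμs => ?_
    rw [integral_finsetSum _ fun i _ => (hθ i).integrableOn, setIntegral_const, smul_eq_mul,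
      mul_one]
    refine tendsto_nhds_unique (tendsto_finsetSum _ fun i _ => hlim i s hs hμs) ?_
    simp only [sum_setIntegral_eq_of_ae_mem_stdSimplex (hθs _) (hΔs _), tendsto_const_nhds]
  filter_upwards [ae_all_iff.2 hnonneg, hsum] with x h0 h1 using ⟨h0, h1⟩

theorem exists_tendsto_setIntegral_of_ae_mem_stdSimplex [Fintype κ] [IsFiniteMeasure μ]
    (𝒰 : Ultrafilter ι) {θs : ι → X → κ → ℝ} (hθs : ∀ k, Measurable (θs k))
    (hΔs : ∀ k, ∀ᵐ x ∂μ, θs k x ∈ stdSimplex ℝ κ) :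
    ∃ θ : X → κ → ℝ, Measurable θ ∧ (∀ᵐ x ∂μ, θ x ∈ stdSimplex ℝ κ) ∧
      ∀ i s, MeasurableSet s → μ s < ∞ →
        Tendsto (fun k => ∫ x in s, θs k x i ∂μ) 𝒰 (𝓝 (∫ x in s, θ x i ∂μ)) := by
  have hθsi (k : ι) (i : κ) : Measurable fun x => θs k x i := (measurable_pi_apply i).comp (hθs k)
  have hbound (k : ι) (i : κ) : ∀ᵐ x ∂μ, ‖θs k x i‖ ≤ 1 :=
    (hΔs k).mono fun x hx => norm_apply_le_one_of_mem_stdSimplex hx i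
  choose φ hφm hφint hφlim using fun i =>
    exists_tendsto_setIntegral_of_ae_bound 𝒰 (fun k => (hθsi k i).aestronglyMeasurable)
      (fun k => hbound k i)
  refine ⟨fun x i => φ i x, measurable_pi_lambda _ hφm, ?_, fun i s hs _ => hφlim i s hs⟩
  exact ae_mem_stdSimplex_of_tendsto_setIntegral
    (fun k i => .of_bound (hθsi k i).aestronglyMeasurable 1 (hbound k i)) hΔs hφint
    fun i s hs _ => hφlim i s hs

theorem integrable_smul_of_ae_mem_stdSimplex [Fintype κ] {θ : X → κ → ℝ} (hθ : Measurable θ)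
    (hΔ : ∀ᵐ x ∂μ, θ x ∈ stdSimplex ℝ κ) {g : X → E} (hg : Integrable g μ) (i : κ) :
    Integrable (fun x => θ x i • g x) μ :=
  hg.bdd_smul 1 ((measurable_pi_apply i).comp hθ).aestronglyMeasurable
    (hΔ.mono fun _ hx => norm_apply_le_one_of_mem_stdSimplex hx i)

theorem norm_integral_sum_smul_le [Fintype κ] {θ : X → κ → ℝ}
    (hΔ : ∀ᵐ x ∂μ, θ x ∈ stdSimplex ℝ κ) {g : κ → X → E} (hg : ∀ i, Integrable (g i) μ) :
    ‖∫ x, ∑ i, θ x i • g i x ∂μ‖ ≤ ∫ x, ∑ i, ‖g i x‖ ∂μ := by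
  refine norm_integral_le_of_norm_le (integrable_finsetSum _ fun i _ => (hg i).norm) ?_
  filter_upwards [hΔ] with x hx
  refine (norm_sum_le _ _).trans (Finset.sum_le_sum fun i _ => ?_)
  rw [norm_smul]
  exact mul_le_of_le_one_left (norm_nonneg _) (norm_apply_le_one_of_mem_stdSimplex hx i)

theorem tendsto_integral_sum_smul_of_tendsto_setIntegral [Fintype κ] [CompleteSpace E]
    {l : Filter ι} {θs : ι → X → κ → ℝ} {θ : X → κ → ℝ} (hθs : ∀ k, Measurable (θs k))
    (hΔs : ∀ k, ∀ᵐ x ∂μ, θs k x ∈ stdSimplex ℝ κ) (hθ : Measurable θ)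
    (hΔ : ∀ᵐ x ∂μ, θ x ∈ stdSimplex ℝ κ)
    (hlim : ∀ i s, MeasurableSet s → μ s < ∞ →
      Tendsto (fun k => ∫ x in s, θs k x i ∂μ) l (𝓝 (∫ x in s, θ x i ∂μ)))
    {g : κ → X → E} (hg : ∀ i, Integrable (g i) μ) :
    Tendsto (fun k => ∫ x, ∑ i, θs k x i • g i x ∂μ) l (𝓝 (∫ x, ∑ i, θ x i • g i x ∂μ)) := by
  simp only [integral_finsetSum _ fun i _ =>
      integrable_smul_of_ae_mem_stdSimplex (hθs _) (hΔs _) (hg i) i,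
    integral_finsetSum _ fun i _ => integrable_smul_of_ae_mem_stdSimplex hθ hΔ (hg i) i]
  refine tendsto_finsetSum _ fun i _ => tendsto_integral_smul_of_tendsto_setIntegral (C := 1)
    (fun k => ((measurable_pi_apply i).comp (hθs k)).aestronglyMeasurable)
    (fun k => (hΔs k).mono fun x hx => by simpa using norm_apply_le_one_of_mem_stdSimplex hx i)
    ((measurable_pi_apply i).comp hθ).aestronglyMeasurable
    (hΔ.mono fun x hx => by simpa using norm_apply_le_one_of_mem_stdSimplex hx i) (hlim i) (hg i)

theorem exists_measurable_ae_eq_mem_of_ae_mem {Y : Type*} [MeasurableSpace Y] {T : Set Y}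
    (hT : MeasurableSet T) {θ θ₀ : X → Y} (hθ : Measurable θ) (hθT : ∀ᵐ x ∂μ, θ x ∈ T)
    (hθ₀ : Measurable θ₀) :
    ∃ θ' : X → Y, Measurable θ' ∧ θ' =ᵐ[μ] θ ∧ ∀ x, θ₀ x ∈ T → θ' x ∈ T := by
  classical
  refine ⟨(θ ⁻¹' T).piecewise θ θ₀, hθ.piecewise (hθ hT) hθ₀, ?_, fun x hx => ?_⟩
  · filter_upwards [hθT] with x hx using Set.piecewise_eq_of_mem _ _ _ hx
  · by_cases h : θ x ∈ T
    · rwa [Set.piecewise_eq_of_mem (θ ⁻¹' T) θ θ₀ h]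
    · rwa [Set.piecewise_eq_of_notMem (θ ⁻¹' T) θ θ₀ h]

def admissibleSet [Fintype κ] (μ : Measure X) (f : κ → X → E) (α : E) : Set (X → κ → ℝ) :=
  {θ | Measurable θ ∧ (∀ᵐ x ∂μ, θ x ∈ stdSimplex ℝ κ) ∧ ∫ x, ∑ i, θ x i • f i x ∂μ = α}

theorem exists_isMinOn_integral_sum_mul [Fintype κ] [CompleteSpace E] [IsFiniteMeasure μ]
    {f : κ → X → E} (hf : ∀ i, Integrable (f i) μ) (α : E) {v : X → κ → ℝ}
    (hv : ∀ i, Integrable (fun x => v x i) μ) (hne : (admissibleSet μ f α).Nonempty) :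
    ∃ θ ∈ admissibleSet μ f α,
      IsMinOn (fun θ => ∫ x, ∑ i, θ x i * v x i ∂μ) (admissibleSet μ f α) θ := by
  refine exists_isMinOn_of_tendsto_ultrafilter hne ⟨-∫ x, ∑ i, ‖v x i‖ ∂μ, ?_⟩ fun θs hθs 𝒰 => ?_
  · rintro _ ⟨θ, ⟨-, hΔ, -⟩, rfl⟩
    exact neg_le_of_abs_le (norm_integral_sum_smul_le hΔ hv)
  obtain ⟨θ, hθ, hΔ, hlim⟩ :=
    exists_tendsto_setIntegral_of_ae_mem_stdSimplex 𝒰 (fun k => (hθs k).1) fun k => (hθs k).2.1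
  have hconstraint : ∫ x, ∑ i, θ x i • f i x ∂μ = α :=
    tendsto_nhds_unique (l := 𝒰) (tendsto_integral_sum_smul_of_tendsto_setIntegral
      (fun k => (hθs k).1) (fun k => (hθs k).2.1) hθ hΔ hlim hf)
      (tendsto_const_nhds.congr fun k => (hθs k).2.2.symm)
  exact ⟨θ, ⟨hθ, hΔ, hconstraint⟩, tendsto_integral_sum_smul_of_tendsto_setIntegral
    (fun k => (hθs k).1) (fun k => (hθs k).2.1) hθ hΔ hlim hv⟩

/-- Existence of a minimizer of `θ ↦ ∫_K θ(x)·v(x) dx` over the constraint set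
`𝒜_α = {θ : K → Δ_m measurable | ∑ᵢ ∫_K θᵢ fᵢ = α}`, assumed nonempty. -/
theorem stmt3 (d n m : ℕ) (K : Set (Fin d → ℝ)) (hK : IsCompact K)
    (f : Fin m → (Fin d → ℝ) → Fin n → ℝ) (hf : ∀ i, IntegrableOn (f i) K)
    (α : Fin n → ℝ)
    (v : (Fin d → ℝ) → Fin m → ℝ) (hv : ContinuousOn v K)
    (A : Set ((Fin d → ℝ) → Fin m → ℝ))
    (hA : A = {θ | Measurable θ ∧ (∀ x ∈ K, θ x ∈ stdSimplex ℝ (Fin m)) ∧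
      (∫ x in K, ∑ i, θ x i • f i x) = α})
    (hne : A.Nonempty) :
    ∃ θ ∈ A, ∀ θ' ∈ A,
      (∫ x in K, ∑ i, θ x i * v x i) ≤ ∫ x in K, ∑ i, θ' x i * v x i := by
  have : IsFiniteMeasure (volume.restrict K) := isFiniteMeasure_restrict.2 hK.measure_lt_top.ne
  have hAS : A ⊆ admissibleSet (volume.restrict K) f α := by
    rw [hA]
    exact fun θ hθ =>
      ⟨hθ.1, (ae_restrict_iff' hK.isClosed.measurableSet).2 (.of_forall hθ.2.1), hθ.2.2⟩
  obtain ⟨θ₀, hθ₀⟩ := hne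
  obtain ⟨θ, hθ, hmin⟩ := exists_isMinOn_integral_sum_mul hf α (v := v)
    (fun i => ((continuous_apply i).comp_continuousOn hv).integrableOn_compact hK) ⟨θ₀, hAS hθ₀⟩
  rw [hA] at hθ₀
  obtain ⟨θ', hθ'm, hθ'θ, hθ'Δ⟩ := exists_measurable_ae_eq_mem_of_ae_mem
    (isClosed_stdSimplex ℝ (Fin m)).measurableSet hθ.1 hθ.2.1 hθ₀.1
  refine ⟨θ', hA ▸ ⟨hθ'm, fun x hx => hθ'Δ x (hθ₀.2.1 x hx), ?_⟩, fun ψ hψ => ?_⟩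
  · rw [integral_congr_ae (g := fun x => ∑ i, θ x i • f i x)
      (hθ'θ.mono fun x hx => by simp only [hx])]
    exact hθ.2.2
  · rw [integral_congr_ae (g := fun x => ∑ i, θ x i * v x i)
      (hθ'θ.mono fun x hx => by simp only [hx])]
    exact isMinOn_iff.1 hmin ψ (hAS hψ)
end

section
/- Let K ⊂ ℝ^d be compact, f₁,…,f_m : K → ℝ^n integrable and v₁,…,v_m : K → ℝ continuous, and let θ* be a minimizer of ∫_K Σᵢ θᵢ(x)vᵢ(x) dx over 𝒜_α = {θ measurable with values in Δ_m | Σᵢ ∫_K θᵢ(x)fᵢ(x)dx = α}. If θ*(x) is not an extreme point of Δ_m on a set of positive measure, then there exist indices i₁ ≠ i₂ and λ ∈ ℝ^n such that meas{x ∈ K | v_{i₁}(x) − v_{i₂}(x) = λ·(f_{i₁}(x) − f_{i₂}(x))} > 0. -/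
open MeasureTheory

lemma auxSE_single_extreme {m : ℕ} (i : Fin m) :
    Pi.single i (1:ℝ) ∈ (stdSimplex ℝ (Fin m)).extremePoints ℝ := by
  refine mem_extremePoints.2 ⟨single_mem_stdSimplex ℝ i, ?_⟩
  rintro y hy z hz ⟨a, b, ha, hb, hab, hsum⟩
  have hyi : y i ≤ 1 := by
    calc y i ≤ ∑ j, y j := Finset.single_le_sum (fun j _ => hy.1 j) (Finset.mem_univ i)
    _ = 1 := hy.2
  have hzi : z i ≤ 1 := by
    calc z i ≤ ∑ j, z j := Finset.single_le_sum (fun j _ => hz.1 j) (Finset.mem_univ i)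
    _ = 1 := hz.2
  have hi : a * y i + b * z i = 1 := by
    have := congrFun hsum i
    simpa using this
  have hy1 : y i = 1 := by nlinarith
  have hz1 : z i = 1 := by nlinarith
  have hone : ∀ (w : Fin m → ℝ), w ∈ stdSimplex ℝ (Fin m) → w i = 1 → w = Pi.single i 1 := by
    intro w hw hwi
    have hsum0 : ∑ j ∈ Finset.univ.erase i, w j = 0 := by
      have := hw.2
      rw [← Finset.add_sum_erase _ _ (Finset.mem_univ i)] at this
      linarith
    have hz : ∀ j ∈ Finset.univ.erase i, w j = 0 :=
      (Finset.sum_eq_zero_iff_of_nonneg (fun j _ => hw.1 j)).1 hsum0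
    funext j
    by_cases hj : j = i
    · subst hj; simpa using hwi
    · rw [Pi.single_eq_of_ne hj]
      exact hz j (Finset.mem_erase.2 ⟨hj, Finset.mem_univ j⟩)
  exact ⟨hone y hy hy1, hone z hz hz1⟩

lemma auxSE_two_pos {m : ℕ} (x : Fin m → ℝ) (hx : x ∈ stdSimplex ℝ (Fin m))
    (h : x ∉ (stdSimplex ℝ (Fin m)).extremePoints ℝ) :
    ∃ i j : Fin m, i ≠ j ∧ 0 < x i ∧ 0 < x j := by
  by_contra hc
  push_neg at hc
  obtain ⟨i, hi⟩ : ∃ i, 0 < x i := by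
    by_contra hall
    push_neg at hall
    have : ∑ j, x j = 0 := Finset.sum_eq_zero fun j _ => le_antisymm (hall j) (hx.1 j)
    rw [hx.2] at this; norm_num at this
  have hxi : x = Pi.single i 1 := by
    have hj0 : ∀ j, j ≠ i → x j = 0 := by
      intro j hj
      rcases lt_or_eq_of_le (hx.1 j) with hlt | heq
      · exact absurd hi (by have := hc j i hj hlt; simpa using this)
      · exact heq.symm
    have hx1 : x i = 1 := by
      have h2 := hx.2
      rw [← Finset.add_sum_erase _ _ (Finset.mem_univ i)] at h2
      have h3 : ∑ j ∈ Finset.univ.erase i, x j = 0 :=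
        Finset.sum_eq_zero fun j hj => hj0 j (Finset.mem_erase.1 hj).1
      rw [h3] at h2; linarith
    funext j
    by_cases hj : j = i
    · subst hj; simpa using hx1
    · rw [Pi.single_eq_of_ne hj]; exact hj0 j hj
  exact h (hxi ▸ auxSE_single_extreme i)

lemma auxSE_la {n : ℕ} (R : Submodule ℝ ((Fin n → ℝ) × ℝ))
    (h : ∀ r ∈ R, r.1 = 0 → r.2 = 0) :
    ∃ lam : Fin n → ℝ, ∀ r ∈ R, r.2 = ∑ j, lam j * r.1 j := by
  set π : R →ₗ[ℝ] (Fin n → ℝ) := (LinearMap.fst ℝ (Fin n → ℝ) ℝ).comp R.subtype with hπ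
  have hker : LinearMap.ker π = ⊥ := by
    rw [LinearMap.ker_eq_bot']
    intro x hx
    have h1 : (x : (Fin n → ℝ) × ℝ).1 = 0 := hx
    have h2 : (x : (Fin n → ℝ) × ℝ).2 = 0 := h x x.2 h1
    exact Subtype.ext (Prod.ext h1 h2)
  obtain ⟨g, hg⟩ := π.exists_leftInverse_of_injective hker
  set L : (Fin n → ℝ) →ₗ[ℝ] ℝ := ((LinearMap.snd ℝ (Fin n → ℝ) ℝ).comp R.subtype).comp g with hL
  refine ⟨fun j => L (fun k => if j = k then 1 else 0), ?_⟩
  intro r hr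
  have h1 : r.2 = L r.1 := by
    have : g (π ⟨r, hr⟩) = ⟨r, hr⟩ := by
      have := congrArg (fun (T : R →ₗ[ℝ] R) => T ⟨r, hr⟩) hg
      simpa using this
    simp only [hL, LinearMap.comp_apply]
    rw [show r.1 = π ⟨r, hr⟩ from rfl, this]
    rfl
  rw [h1]
  conv_lhs => rw [pi_eq_sum_univ r.1]
  rw [map_sum]
  refine Finset.sum_congr rfl fun j _ => ?_
  rw [LinearMap.map_smul, smul_eq_mul, mul_comm]

set_option maxHeartbeats 1000000 in
/-- Necessary condition: if a minimizer `θ*` of `∫_K ∑ᵢ θᵢ vᵢ` over `𝒜_α` fails to take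
extreme values of the simplex on a set of positive measure, then for some `i₁ ≠ i₂` and some
Lagrange multiplier `λ ∈ ℝ^n`, `{x ∈ K | v_{i₁} x - v_{i₂} x = λ·(f_{i₁} x - f_{i₂} x)}`
has positive measure. -/
theorem stmt5 (d n m : ℕ) (K : Set (Fin d → ℝ)) (hK : IsCompact K)
    (f : Fin m → (Fin d → ℝ) → Fin n → ℝ) (hf : ∀ i, IntegrableOn (f i) K)
    (v : Fin m → (Fin d → ℝ) → ℝ) (hv : ∀ i, ContinuousOn (v i) K)
    (α : Fin n → ℝ)
    (A : Set ((Fin d → ℝ) → Fin m → ℝ))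
    (hA : A = {θ : (Fin d → ℝ) → Fin m → ℝ | Measurable θ ∧
      (∀ x ∈ K, θ x ∈ stdSimplex ℝ (Fin m)) ∧ (∫ x in K, ∑ i, θ x i • f i x) = α})
    (θs : (Fin d → ℝ) → Fin m → ℝ) (hθs : θs ∈ A)
    (hmin : ∀ θ ∈ A,
      (∫ x in K, ∑ i, θs x i * v i x) ≤ ∫ x in K, ∑ i, θ x i * v i x)
    (hnonext :
      0 < volume {x ∈ K | θs x ∉ (stdSimplex ℝ (Fin m)).extremePoints ℝ}) :
    ∃ i₁ i₂ : Fin m, i₁ ≠ i₂ ∧ ∃ lam : Fin n → ℝ,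
      0 < volume {x ∈ K | v i₁ x - v i₂ x = ∑ j, lam j * (f i₁ x j - f i₂ x j)} := by
  subst hA
  obtain ⟨hθm, hθS, hθI⟩ := hθs
  have hKm : MeasurableSet K := hK.isClosed.measurableSet
  haveI hKfin : IsFiniteMeasure (volume.restrict K) :=
    ⟨by rw [Measure.restrict_apply_univ]; exact hK.measure_lt_top⟩
  -- Step 1: find a pair of indices and a set of positive measure where both coordinates are ≥ ε
  obtain ⟨i₁, i₂, k, hne, hEpos⟩ :
      ∃ i₁ i₂ : Fin m, ∃ k : ℕ, i₁ ≠ i₂ ∧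
        0 < volume (K ∩ ({x | (1:ℝ)/(k+1) ≤ θs x i₁} ∩ {x | (1:ℝ)/(k+1) ≤ θs x i₂})) := by
    by_contra hcon
    push_neg at hcon
    have hnull : volume (⋃ i : Fin m, ⋃ j : Fin m, ⋃ k : ℕ,
        if i ≠ j then
          K ∩ ({x | (1:ℝ)/(k+1) ≤ θs x i} ∩ {x | (1:ℝ)/(k+1) ≤ θs x j}) else ∅) = 0 := by
      refine measure_iUnion_null fun i => measure_iUnion_null fun j =>
        measure_iUnion_null fun k => ?_
      by_cases hij : i ≠ j
      · rw [if_pos hij]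
        exact le_antisymm (not_lt.1 fun hlt => absurd hlt (by simpa using hcon i j k hij))
          (by simp)
      · rw [if_neg hij]; simp
    have hsub : {x ∈ K | θs x ∉ (stdSimplex ℝ (Fin m)).extremePoints ℝ} ⊆
        ⋃ i : Fin m, ⋃ j : Fin m, ⋃ k : ℕ,
          if i ≠ j then
            K ∩ ({x | (1:ℝ)/(k+1) ≤ θs x i} ∩ {x | (1:ℝ)/(k+1) ≤ θs x j}) else ∅ := by
      rintro x ⟨hxK, hxne⟩
      obtain ⟨i, j, hij, hi, hj⟩ := auxSE_two_pos _ (hθS x hxK) hxne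
      obtain ⟨k, hk⟩ := exists_nat_one_div_lt (lt_min hi hj)
      refine Set.mem_iUnion.2 ⟨i, Set.mem_iUnion.2 ⟨j, Set.mem_iUnion.2 ⟨k, ?_⟩⟩⟩
      rw [if_pos hij]
      exact ⟨hxK, le_of_lt (lt_of_lt_of_le hk (min_le_left _ _)),
        le_of_lt (lt_of_lt_of_le hk (min_le_right _ _))⟩
    exact hnonext.ne' (measure_mono_null hsub hnull)
  set ε : ℝ := (1:ℝ)/(k+1) with hεdef
  have hε : 0 < ε := by positivity
  set E : Set (Fin d → ℝ) := K ∩ ({x | ε ≤ θs x i₁} ∩ {x | ε ≤ θs x i₂}) with hEdef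
  have hEK : E ⊆ K := Set.inter_subset_left
  have hEm : MeasurableSet E :=
    hKm.inter ((measurableSet_le measurable_const ((measurable_pi_apply i₁).comp hθm)).inter
      (measurableSet_le measurable_const ((measurable_pi_apply i₂).comp hθm)))
  have hEb : ∀ x ∈ E, ε ≤ θs x i₁ ∧ ε ≤ θs x i₂ := fun x hx => ⟨hx.2.1, hx.2.2⟩
  -- Step 2: integrability facts
  have hGint : IntegrableOn (fun x => f i₁ x - f i₂ x) K := (hf i₁).sub (hf i₂)
  have hGjint : ∀ j, IntegrableOn (fun x => f i₁ x j - f i₂ x j) K := by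
    intro j
    have := (ContinuousLinearMap.proj (R := ℝ) (φ := fun _ : Fin n => ℝ) j).integrable_comp hGint
    simpa [IntegrableOn] using this
  have hvint : ∀ i, IntegrableOn (v i) K := fun i => (hv i).integrableOn_compact hK
  have hwint : IntegrableOn (fun x => v i₁ x - v i₂ x) K := (hvint i₁).sub (hvint i₂)
  have hθ01 : ∀ᵐ x ∂(volume.restrict K), ∀ i, ‖θs x i‖ ≤ 1 := by
    filter_upwards [ae_restrict_mem hKm] with x hx
    intro i
    rw [Real.norm_eq_abs, abs_of_nonneg ((hθS x hx).1 i)]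
    calc θs x i ≤ ∑ j, θs x j :=
      Finset.single_le_sum (fun j _ => (hθS x hx).1 j) (Finset.mem_univ i)
    _ = 1 := (hθS x hx).2
  have hθvint : IntegrableOn (fun x => ∑ i, θs x i * v i x) K := by
    refine integrable_finset_sum _ fun i _ => ?_
    refine Integrable.bdd_mul (c := 1) (hvint i)
      ((measurable_pi_apply i).comp hθm).aestronglyMeasurable ?_
    filter_upwards [hθ01] with x hx using hx i
  have hθfint : IntegrableOn (fun x => ∑ i, θs x i • f i x) K := by
    refine integrable_finset_sum _ fun i _ => ?_
    have hb : MemLp (fun x => θs x i) ⊤ (volume.restrict K) :=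
      memLp_top_of_bound ((measurable_pi_apply i).comp hθm).aestronglyMeasurable 1
        (by filter_upwards [hθ01] with x hx using hx i)
    have := Integrable.smul_of_top_right (f := f i) (φ := fun x => θs x i) (hf i) hb
    exact this
  have hφfj : ∀ φ : (Fin d → ℝ) → ℝ, Measurable φ → (∃ M, ∀ x, |φ x| ≤ M) →
      ∀ j, IntegrableOn (fun x => φ x * (f i₁ x j - f i₂ x j)) K := by
    rintro φ hm ⟨M, hM⟩ j
    exact (hGjint j).bdd_mul hm.aestronglyMeasurable (Filter.Eventually.of_forall fun x => by
      rw [Real.norm_eq_abs]; exact hM x)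
  have hφv : ∀ φ : (Fin d → ℝ) → ℝ, Measurable φ → (∃ M, ∀ x, |φ x| ≤ M) →
      IntegrableOn (fun x => φ x * (v i₁ x - v i₂ x)) K := by
    rintro φ hm ⟨M, hM⟩
    exact hwint.bdd_mul hm.aestronglyMeasurable (Filter.Eventually.of_forall fun x => by
      rw [Real.norm_eq_abs]; exact hM x)
  have hφG : ∀ φ : (Fin d → ℝ) → ℝ, Measurable φ → (∃ M, ∀ x, |φ x| ≤ M) →
      IntegrableOn (fun x => φ x • (f i₁ x - f i₂ x)) K := by
    rintro φ hm ⟨M, hM⟩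
    have hb : MemLp φ ⊤ (volume.restrict K) :=
      memLp_top_of_bound hm.aestronglyMeasurable M
        (Filter.Eventually.of_forall fun x => by rw [Real.norm_eq_abs]; exact hM x)
    have := Integrable.smul_of_top_right (f := fun x => f i₁ x - f i₂ x) (φ := φ) hGint hb
    exact this
  -- Step 3: key perturbation lemma
  have key : ∀ φ : (Fin d → ℝ) → ℝ, Measurable φ → (∀ x, |φ x| ≤ 1) → (∀ x ∉ E, φ x = 0) →
      (∫ x in K, φ x • (f i₁ x - f i₂ x)) = 0 →
      (∫ x in K, φ x * (v i₁ x - v i₂ x)) = 0 := by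
    intro φ hφm hφ1 hφE hφc
    have hIneq : ∀ t : ℝ, |t| ≤ ε →
        0 ≤ t * ∫ x in K, φ x * (v i₁ x - v i₂ x) := by
      intro t ht
      set θt : (Fin d → ℝ) → Fin m → ℝ := fun x i =>
        θs x i + (t * φ x) * ((Pi.single i₁ (1:ℝ) : Fin m → ℝ) i - (Pi.single i₂ (1:ℝ) : Fin m → ℝ) i) with hθt
      have hsingle : ∀ (c : ℝ) (x : Fin d → ℝ) (i₀ : Fin m),
          ∑ i, (c * (Pi.single i₀ (1:ℝ) : Fin m → ℝ) i) • f i x = c • f i₀ x := by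
        intro c x i₀
        rw [Finset.sum_eq_single i₀]
        · simp
        · intro i _ hi
          rw [Pi.single_eq_of_ne hi]; simp
        · simp
      have hsinglev : ∀ (c : ℝ) (x : Fin d → ℝ) (i₀ : Fin m),
          ∑ i, (c * (Pi.single i₀ (1:ℝ) : Fin m → ℝ) i) * v i x = c * v i₀ x := by
        intro c x i₀
        rw [Finset.sum_eq_single i₀]
        · simp
        · intro i _ hi
          rw [Pi.single_eq_of_ne hi]; simp
        · simp
      have htb : ∀ x, |t * φ x| ≤ ε := by
        intro x
        rw [abs_mul]
        calc |t| * |φ x| ≤ ε * 1 :=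
          mul_le_mul ht (hφ1 x) (abs_nonneg _) hε.le
        _ = ε := mul_one ε
      have hmem : θt ∈ {θ : (Fin d → ℝ) → Fin m → ℝ | Measurable θ ∧
          (∀ x ∈ K, θ x ∈ stdSimplex ℝ (Fin m)) ∧ (∫ x in K, ∑ i, θ x i • f i x) = α} := by
        refine ⟨?_, ?_, ?_⟩
        · refine measurable_pi_iff.2 fun i => ?_
          exact ((measurable_pi_apply i).comp hθm).add ((hφm.const_mul t).mul_const _)
        · intro x hx
          constructor
          · intro i
            by_cases hxE : x ∈ E
            · by_cases hi1 : i = i₁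
              · subst hi1
                have h1 : (Pi.single i (1:ℝ) : Fin m → ℝ) i = 1 := Pi.single_eq_same i 1
                have h2 : (Pi.single i₂ (1:ℝ) : Fin m → ℝ) i = 0 := Pi.single_eq_of_ne hne 1
                simp only [hθt, h1, h2, sub_zero, mul_one]
                have := (hEb x hxE).1
                have := neg_abs_le (t * φ x)
                have := htb x
                linarith
              · by_cases hi2 : i = i₂
                · subst hi2
                  have h1 : (Pi.single i₁ (1:ℝ) : Fin m → ℝ) i = 0 := Pi.single_eq_of_ne (Ne.symm hne) 1
                  have h2 : (Pi.single i (1:ℝ) : Fin m → ℝ) i = 1 := Pi.single_eq_same i 1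
                  simp only [hθt, h1, h2, zero_sub, mul_neg, mul_one]
                  have := (hEb x hxE).2
                  have := le_abs_self (t * φ x)
                  have := htb x
                  linarith
                · have h1 : (Pi.single i₁ (1:ℝ) : Fin m → ℝ) i = 0 := Pi.single_eq_of_ne hi1 1
                  have h2 : (Pi.single i₂ (1:ℝ) : Fin m → ℝ) i = 0 := Pi.single_eq_of_ne hi2 1
                  simp only [hθt, h1, h2, sub_zero, mul_zero, add_zero]
                  exact (hθS x hx).1 i
            · simp only [hθt, hφE x hxE, mul_zero, zero_mul, add_zero]
              exact (hθS x hx).1 i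
          · simp only [hθt]
            rw [Finset.sum_add_distrib, ← Finset.mul_sum]
            have : ∑ i, ((Pi.single i₁ (1:ℝ) : Fin m → ℝ) i - (Pi.single i₂ (1:ℝ) : Fin m → ℝ) i) = 0 := by
              rw [Finset.sum_sub_distrib]
              simp [Finset.sum_pi_single']
            rw [this, mul_zero, add_zero, (hθS x hx).2]
        · have hpt : (fun x => ∑ i, θt x i • f i x) =
              fun x => (∑ i, θs x i • f i x) + t • (φ x • (f i₁ x - f i₂ x)) := by
            funext x
            simp only [hθt, add_smul, Finset.sum_add_distrib]
            congr 1
            have : ∀ i, ((t * φ x) * ((Pi.single i₁ (1:ℝ) : Fin m → ℝ) i - (Pi.single i₂ (1:ℝ) : Fin m → ℝ) i)) • f i x =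
                ((t * φ x) * (Pi.single i₁ (1:ℝ) : Fin m → ℝ) i) • f i x -
                ((t * φ x) * (Pi.single i₂ (1:ℝ) : Fin m → ℝ) i) • f i x := by
              intro i; rw [mul_sub, sub_smul]
            rw [Finset.sum_congr rfl fun i _ => this i, Finset.sum_sub_distrib,
              hsingle, hsingle, ← smul_sub, smul_smul]
          have hBint : Integrable (fun x => t • (φ x • (f i₁ x - f i₂ x)))
              (volume.restrict K) := by
            have := (hφG φ hφm ⟨1, hφ1⟩).smul t
            exact this
          rw [hpt, integral_add hθfint hBint, integral_smul, hφc,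
            smul_zero, add_zero, hθI]
      have h1 := hmin θt hmem
      have hpt : (fun x => ∑ i, θt x i * v i x) =
          fun x => (∑ i, θs x i * v i x) + t * (φ x * (v i₁ x - v i₂ x)) := by
        funext x
        simp only [hθt, add_mul, Finset.sum_add_distrib]
        congr 1
        have : ∀ i, ((t * φ x) * ((Pi.single i₁ (1:ℝ) : Fin m → ℝ) i - (Pi.single i₂ (1:ℝ) : Fin m → ℝ) i)) * v i x =
            ((t * φ x) * (Pi.single i₁ (1:ℝ) : Fin m → ℝ) i) * v i x -
            ((t * φ x) * (Pi.single i₂ (1:ℝ) : Fin m → ℝ) i) * v i x := by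
          intro i; ring
        rw [Finset.sum_congr rfl fun i _ => this i, Finset.sum_sub_distrib,
          hsinglev, hsinglev]
        ring
      rw [hpt, integral_add hθvint (((hφv φ hφm ⟨1, hφ1⟩)).const_mul t),
        integral_const_mul] at h1
      linarith
    have hp := hIneq ε (by rw [abs_of_pos hε])
    have hm' := hIneq (-ε) (by rw [abs_neg, abs_of_pos hε])
    have hle : ε * (∫ x in K, φ x * (v i₁ x - v i₂ x)) ≤ 0 := by nlinarith
    have heq : ε * (∫ x in K, φ x * (v i₁ x - v i₂ x)) = 0 := le_antisymm hle hp
    rcases mul_eq_zero.1 heq with h | h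
    · exact absurd h hε.ne'
    · exact h
  -- Step 4: the submodule of attainable (constraint, objective) pairs and the multiplier
  set P : ((Fin d → ℝ) → ℝ) → Prop := fun φ =>
    Measurable φ ∧ (∃ M, 0 ≤ M ∧ ∀ x, |φ x| ≤ M) ∧ ∀ x ∉ E, φ x = 0 with hPdef
  have hPbd : ∀ φ, P φ → ∃ M, ∀ x, |φ x| ≤ M := fun φ hφ => ⟨hφ.2.1.choose, hφ.2.1.choose_spec.2⟩
  set cI : ((Fin d → ℝ) → ℝ) → ((Fin n → ℝ) × ℝ) := fun φ =>
    (fun j => ∫ x in K, φ x * (f i₁ x j - f i₂ x j), ∫ x in K, φ x * (v i₁ x - v i₂ x))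
    with hcIdef
  have hcIadd : ∀ φ ψ, P φ → P ψ → cI (φ + ψ) = cI φ + cI ψ := by
    intro φ ψ hφ hψ
    have h1 : ∀ j, (∫ x in K, (φ + ψ) x * (f i₁ x j - f i₂ x j)) =
        (∫ x in K, φ x * (f i₁ x j - f i₂ x j)) + ∫ x in K, ψ x * (f i₁ x j - f i₂ x j) := by
      intro j
      rw [← integral_add (hφfj φ hφ.1 (hPbd φ hφ) j) (hφfj ψ hψ.1 (hPbd ψ hψ) j)]
      congr 1; funext x; simp [add_mul]
    have h2 : (∫ x in K, (φ + ψ) x * (v i₁ x - v i₂ x)) =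
        (∫ x in K, φ x * (v i₁ x - v i₂ x)) + ∫ x in K, ψ x * (v i₁ x - v i₂ x) := by
      rw [← integral_add (hφv φ hφ.1 (hPbd φ hφ)) (hφv ψ hψ.1 (hPbd ψ hψ))]
      congr 1; funext x; simp [add_mul]
    simp only [hcIdef, Prod.mk_add_mk, Prod.mk.injEq]
    exact ⟨funext h1, h2⟩
  have hcIsmul : ∀ (a : ℝ) φ, cI (a • φ) = a • cI φ := by
    intro a φ
    have h1 : ∀ j, (∫ x in K, (a • φ) x * (f i₁ x j - f i₂ x j)) =
        a * ∫ x in K, φ x * (f i₁ x j - f i₂ x j) := by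
      intro j
      rw [← integral_const_mul]
      congr 1; funext x; simp [mul_assoc]
    have h2 : (∫ x in K, (a • φ) x * (v i₁ x - v i₂ x)) =
        a * ∫ x in K, φ x * (v i₁ x - v i₂ x) := by
      rw [← integral_const_mul]
      congr 1; funext x; simp [mul_assoc]
    simp only [hcIdef, Prod.smul_mk, Prod.mk.injEq, smul_eq_mul]
    exact ⟨funext fun j => by simpa [smul_eq_mul] using h1 j, h2⟩
  set R : Submodule ℝ ((Fin n → ℝ) × ℝ) :=
    { carrier := {p | ∃ φ, P φ ∧ p = cI φ}
      add_mem' := by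
        rintro p q ⟨φ, hφ, rfl⟩ ⟨ψ, hψ, rfl⟩
        refine ⟨φ + ψ, ?_, (hcIadd φ ψ hφ hψ).symm⟩
        obtain ⟨hm1, ⟨M1, hM10, hM1⟩, hz1⟩ := hφ
        obtain ⟨hm2, ⟨M2, hM20, hM2⟩, hz2⟩ := hψ
        exact ⟨hm1.add hm2, ⟨M1 + M2, by linarith, fun x =>
          (abs_add_le _ _).trans (add_le_add (hM1 x) (hM2 x))⟩,
          fun x hx => by simp [hz1 x hx, hz2 x hx]⟩
      zero_mem' := by
        refine ⟨0, ⟨measurable_const, ⟨0, le_refl 0, fun x => by simp⟩, fun x _ => rfl⟩, ?_⟩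
        simp only [hcIdef]
        refine Prod.ext (funext fun j => ?_) ?_ <;> simp
      smul_mem' := by
        rintro a p ⟨φ, hφ, rfl⟩
        refine ⟨a • φ, ?_, (hcIsmul a φ).symm⟩
        obtain ⟨hm1, ⟨M1, hM10, hM1⟩, hz1⟩ := hφ
        refine ⟨hm1.const_smul a, ⟨|a| * M1, by positivity, fun x => ?_⟩,
          fun x hx => by simp [hz1 x hx]⟩
        simp only [Pi.smul_apply, smul_eq_mul, abs_mul]
        exact mul_le_mul_of_nonneg_left (hM1 x) (abs_nonneg a) } with hRdef
  have hker : ∀ r ∈ R, r.1 = 0 → r.2 = 0 := by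
    rintro r ⟨φ, hφ, rfl⟩ h1
    obtain ⟨hm1, ⟨M, hM0, hM⟩, hz1⟩ := hφ
    rcases eq_or_lt_of_le hM0 with hM0' | hM0'
    · have hzero : ∀ x, φ x = 0 := fun x =>
        abs_eq_zero.1 (le_antisymm (by rw [hM0']; exact hM x) (abs_nonneg _))
      simp only [hcIdef]
      have : (fun x => φ x * (v i₁ x - v i₂ x)) = fun _ => (0:ℝ) := by
        funext x; rw [hzero x, zero_mul]
      rw [this, integral_zero]
    · set ψ : (Fin d → ℝ) → ℝ := M⁻¹ • φ with hψdef
      have hψm : Measurable ψ := hm1.const_smul M⁻¹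
      have hψ1 : ∀ x, |ψ x| ≤ 1 := by
        intro x
        simp only [hψdef, Pi.smul_apply, smul_eq_mul, abs_mul, abs_inv,
          abs_of_pos hM0']
        rw [inv_mul_le_iff₀ hM0', mul_one]
        exact hM x
      have hψE : ∀ x ∉ E, ψ x = 0 := fun x hx => by
        simp [hψdef, hz1 x hx]
      have hψc : (∫ x in K, ψ x • (f i₁ x - f i₂ x)) = 0 := by
        have hint : IntegrableOn (fun x => ψ x • (f i₁ x - f i₂ x)) K :=
          hφG ψ hψm ⟨1, hψ1⟩
        funext j
        have hcc := (ContinuousLinearMap.proj (R := ℝ) (φ := fun _ : Fin n => ℝ) j).integral_comp_comm hint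
        have h2 : (∫ x in K, ψ x • (f i₁ x - f i₂ x)) j =
            ∫ x in K, ψ x * (f i₁ x j - f i₂ x j) := by
          rw [show (∫ x in K, ψ x • (f i₁ x - f i₂ x)) j
              = (ContinuousLinearMap.proj (R := ℝ) (φ := fun _ : Fin n => ℝ) j)
                (∫ x in K, ψ x • (f i₁ x - f i₂ x)) from rfl, ← hcc]
          congr 1
        rw [Pi.zero_apply, h2]
        have h3 : (∫ x in K, ψ x * (f i₁ x j - f i₂ x j)) =
            M⁻¹ * ∫ x in K, φ x * (f i₁ x j - f i₂ x j) := by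
          rw [← integral_const_mul]
          congr 1; funext x; simp [hψdef, mul_assoc]
        rw [h3]
        have h4 : (∫ x in K, φ x * (f i₁ x j - f i₂ x j)) = 0 := congrFun h1 j
        rw [h4, mul_zero]
      have hIψ := key ψ hψm hψ1 hψE hψc
      have h5 : (∫ x in K, ψ x * (v i₁ x - v i₂ x)) =
          M⁻¹ * ∫ x in K, φ x * (v i₁ x - v i₂ x) := by
        rw [← integral_const_mul]
        congr 1; funext x; simp [hψdef, mul_assoc]
      rw [h5] at hIψ
      rcases mul_eq_zero.1 hIψ with h | h
      · exact absurd h (inv_ne_zero hM0'.ne')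
      · exact h
  obtain ⟨lam, hlam⟩ := auxSE_la R hker
  refine ⟨i₁, i₂, hne, lam, ?_⟩
  -- Step 5: conclude that w = λ·g a.e. on E
  set h : (Fin d → ℝ) → ℝ := fun x =>
    (v i₁ x - v i₂ x) - ∑ j, lam j * (f i₁ x j - f i₂ x j) with hhdef
  have hhint : IntegrableOn h K :=
    hwint.sub (integrable_finset_sum _ fun j _ => (hGjint j).const_mul (lam j))
  haveI : IsFiniteMeasure (volume.restrict E) :=
    ⟨by rw [Measure.restrict_apply_univ]
        exact lt_of_le_of_lt (measure_mono hEK) hK.measure_lt_top⟩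
  have hzero : ∀ s : Set (Fin d → ℝ), MeasurableSet s →
      (∫ x in (s ∩ E), h x) = 0 := by
    intro s hs
    set φ : (Fin d → ℝ) → ℝ := (s ∩ E).indicator (fun _ => (1:ℝ)) with hφdef
    have hφP : P φ := by
      refine ⟨measurable_const.indicator (hs.inter hEm), ⟨1, zero_le_one, fun x => ?_⟩,
        fun x hx => Set.indicator_of_notMem (fun hmem => hx hmem.2) _⟩
      by_cases hx : x ∈ s ∩ E <;> simp [hφdef, Set.indicator_apply, hx]
    have hmem : cI φ ∈ R := ⟨φ, hφP, rfl⟩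
    have hφbd : ∃ M, ∀ x, |φ x| ≤ M := ⟨hφP.2.1.choose, hφP.2.1.choose_spec.2⟩
    have heq := hlam (cI φ) hmem
    simp only [hcIdef] at heq
    -- rewrite the RHS as a single integral
    have h6 : ∑ j, lam j * ∫ x in K, φ x * (f i₁ x j - f i₂ x j) =
        ∫ x in K, φ x * ∑ j, lam j * (f i₁ x j - f i₂ x j) := by
      calc ∑ j, lam j * ∫ x in K, φ x * (f i₁ x j - f i₂ x j)
          = ∑ j, ∫ x in K, lam j * (φ x * (f i₁ x j - f i₂ x j)) := by
            exact Finset.sum_congr rfl fun j _ => (integral_const_mul _ _).symm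
        _ = ∫ x in K, ∑ j, lam j * (φ x * (f i₁ x j - f i₂ x j)) :=
            (integral_finset_sum _ fun j _ =>
              (hφfj φ hφP.1 hφbd j).const_mul (lam j)).symm
        _ = ∫ x in K, φ x * ∑ j, lam j * (f i₁ x j - f i₂ x j) := by
            congr 1; funext x
            rw [Finset.mul_sum]
            exact Finset.sum_congr rfl fun j _ => by ring
    rw [h6] at heq
    have hint2 : IntegrableOn (fun x => φ x * ∑ j, lam j * (f i₁ x j - f i₂ x j)) K := by
      have hfe : (fun x => φ x * ∑ j, lam j * (f i₁ x j - f i₂ x j)) =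
          fun x => ∑ j, lam j * (φ x * (f i₁ x j - f i₂ x j)) := by
        funext x
        rw [Finset.mul_sum]
        exact Finset.sum_congr rfl fun j _ => by ring
      rw [hfe]
      exact integrable_finset_sum _ fun j _ => (hφfj φ hφP.1 hφbd j).const_mul (lam j)
    have h7 : (∫ x in K, φ x * h x) = 0 := by
      have hfe : (fun x => φ x * h x) =
          fun x => φ x * (v i₁ x - v i₂ x) -
            φ x * ∑ j, lam j * (f i₁ x j - f i₂ x j) := by
        funext x
        simp only [hhdef]
        ring
      rw [hfe, integral_sub (hφv φ hφP.1 hφbd) hint2, heq, sub_self]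
    have h8 : (∫ x in K, φ x * h x) = ∫ x in (s ∩ E), h x := by
      have hfe : (fun x => φ x * h x) = (s ∩ E).indicator h := by
        funext x
        by_cases hx : x ∈ s ∩ E <;> simp [hφdef, Set.indicator_apply, hx]
      rw [hfe, integral_indicator (hs.inter hEm), Measure.restrict_restrict (hs.inter hEm),
        Set.inter_eq_left.2 (Set.inter_subset_right.trans hEK)]
    rw [← h8, h7]
  -- apply the a.e. vanishing criterion on E
  have hμE : ∀ s, MeasurableSet s → (volume.restrict E) s < ⊤ →
      IntegrableOn h s (volume.restrict E) := by
    intro s hs _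
    rw [IntegrableOn, Measure.restrict_restrict hs]
    exact hhint.mono_set (Set.inter_subset_right.trans hEK)
  have hz2 : ∀ s, MeasurableSet s → (volume.restrict E) s < ⊤ →
      ∫ x in s, h x ∂(volume.restrict E) = 0 := by
    intro s hs _
    rw [Measure.restrict_restrict hs]
    exact hzero s hs
  have hae : h =ᵐ[volume.restrict E] 0 :=
    ae_eq_zero_of_forall_setIntegral_eq_of_sigmaFinite hμE hz2
  have h0 : volume ({x | h x ≠ 0} ∩ E) = 0 := by
    have h9 := hae
    rw [Filter.EventuallyEq, ae_iff] at h9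
    rw [Measure.restrict_apply' hEm] at h9
    simpa using h9
  have hfinal : E \ ({x | h x ≠ 0} ∩ E) ⊆
      {x ∈ K | v i₁ x - v i₂ x = ∑ j, lam j * (f i₁ x j - f i₂ x j)} := by
    rintro x ⟨hxE, hxn⟩
    refine ⟨hEK hxE, ?_⟩
    have hx0 : h x = 0 := not_not.1 fun hne' => hxn ⟨hne', hxE⟩
    have hx0' : (v i₁ x - v i₂ x) - ∑ j, lam j * (f i₁ x j - f i₂ x j) = 0 := hx0
    exact sub_eq_zero.1 hx0'
  calc (0:ENNReal) < volume E := hEpos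
    _ = volume (E \ ({x | h x ≠ 0} ∩ E)) := (measure_diff_null h0).symm
    _ ≤ _ := measure_mono hfinal
end

section
/- Let K ⊂ ℝ^d be compact, g : K → ℝ^n continuous, m ∈ ℕ with m^d ≥ n+1, h = 1/m, and fix ξ ∈ [0,h]^d with grid points x_{j,ξ} = ξ + h·j for j ∈ {0,…,m−1}^d. Then the set Y(ξ) = {y ∈ ℝ^{({0,…,m−1}^d)} | for all λ ∈ ℝ^n, #{j : y_j = λ·g(x_{j,ξ})} ≤ n} is dense in ℝ^{m^d}. -/
/-- Density of the set `Y(ξ)` of grid values `y` such that for every `λ ∈ ℝ^n` at most `n`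
grid points `x_{j,ξ} = ξ + h·j` satisfy `y_j = λ · g(x_{j,ξ})`, where `h = 1/m` and
`m^d ≥ n + 1`. -/
theorem stmt8 (d n m : ℕ) (hm : 1 ≤ m) (hmd : n + 1 ≤ m ^ d)
    (g : (Fin d → ℝ) → Fin n → ℝ) (hg : Continuous g)
    (ξ : Fin d → ℝ) (hξ : ∀ i, ξ i ∈ Set.Icc (0 : ℝ) (1 / m)) :
    Dense {y : (Fin d → Fin m) → ℝ | ∀ lam : Fin n → ℝ,
      Nat.card {j : Fin d → Fin m //
        y j = ∑ k, lam k * g (fun i => ξ i + (1 / m) * (j i : ℝ)) k} ≤ n} := by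
  classical
  set J := Fin d → Fin m
  set v : J → Fin n → ℝ := fun j => g (fun i => ξ i + (1 / m) * (j i : ℝ)) with hv
  -- for each embedding `s : Fin (n+1) ↪ J`, the set of `y` matching some `lam` on `range s`
  -- is a proper submodule
  let W : (Fin (n + 1) ↪ J) → Submodule ℝ (J → ℝ) := fun s =>
    { carrier := {y | ∃ lam : Fin n → ℝ, ∀ i, y (s i) = ∑ k, lam k * v (s i) k}
      add_mem' := by
        rintro a b ⟨la, hla⟩ ⟨lb, hlb⟩
        refine ⟨la + lb, fun i => ?_⟩
        simp only [Pi.add_apply, hla i, hlb i, add_mul, Finset.sum_add_distrib]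
      zero_mem' := ⟨0, fun i => by simp⟩
      smul_mem' := by
        rintro c a ⟨la, hla⟩
        refine ⟨c • la, fun i => ?_⟩
        simp only [Pi.smul_apply, hla i, smul_eq_mul, Finset.mul_sum, mul_assoc] }
  have hWne : ∀ s, W s ≠ ⊤ := by
    intro s hs
    -- the vectors `u k = (v (s i) k)_i` span a proper subspace of `ℝ^(n+1)`
    set u : Fin n → (Fin (n + 1) → ℝ) := fun k i => v (s i) k with hu
    have hspan : Submodule.span ℝ (Set.range u) < ⊤ := by
      apply span_lt_top_of_card_lt_finrank
      calc (Set.range u).toFinset.card ≤ Fintype.card (Fin n) := by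
            rw [Set.toFinset_range]
            exact Finset.card_image_le.trans (by simp)
        _ < Module.finrank ℝ (Fin (n + 1) → ℝ) := by
            simp [Module.finrank_fintype_fun_eq_card]
    obtain ⟨w, -, hw⟩ := SetLike.exists_of_lt hspan
    have hy : Function.extend s w 0 ∈ W s := hs ▸ Submodule.mem_top
    obtain ⟨lam, hlam⟩ := hy
    apply hw
    have : w = ∑ k, lam k • u k := by
      funext i
      have := hlam i
      rw [s.injective.extend_apply] at this
      simpa using this
    rw [this]
    exact Submodule.sum_mem _ fun k _ =>
      Submodule.smul_mem _ _ (Submodule.subset_span ⟨k, rfl⟩)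
  -- the complement of the target set is contained in the union of the `W s`
  have hsub : {y : J → ℝ | ∀ lam : Fin n → ℝ,
      Nat.card {j : J // y j = ∑ k, lam k * v j k} ≤ n}ᶜ ⊆
      ⋃ s : Fin (n + 1) ↪ J, (W s : Set (J → ℝ)) := by
    intro y hy
    simp only [Set.mem_compl_iff, Set.mem_setOf_eq, not_forall, not_le] at hy
    obtain ⟨lam, hlam⟩ := hy
    have hcard : n + 1 ≤ Fintype.card {j : J // y j = ∑ k, lam k * v j k} := by
      rwa [← Nat.card_eq_fintype_card]
    obtain ⟨e⟩ := Function.Embedding.nonempty_of_card_le (by simpa using hcard :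
      Fintype.card (Fin (n + 1)) ≤ Fintype.card {j : J // y j = ∑ k, lam k * v j k})
    refine Set.mem_iUnion.2 ⟨e.trans (Function.Embedding.subtype _), lam, fun i => ?_⟩
    exact (e i).2
  -- conclude: the complement is null, hence the set is dense
  have hnull : MeasureTheory.volume
      ({y : J → ℝ | ∀ lam : Fin n → ℝ,
        Nat.card {j : J // y j = ∑ k, lam k * v j k} ≤ n}ᶜ) = 0 := by
    refine MeasureTheory.measure_mono_null hsub ?_
    refine MeasureTheory.measure_iUnion_null fun s => ?_
    exact MeasureTheory.Measure.addHaar_submodule _ _ (hWne s)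
  have := MeasureTheory.Measure.dense_of_ae (μ := (MeasureTheory.volume : MeasureTheory.Measure (J → ℝ)))
    (p := fun y => ∀ lam : Fin n → ℝ,
      Nat.card {j : J // y j = ∑ k, lam k * v j k} ≤ n)
    (by rwa [MeasureTheory.ae_iff])
  exact this
end

section
/- Let E ⊂ ℝ^d be measurable with positive finite measure, and let f, v : E → ℝ be such that f is integrable with values in ℝ^n, v is integrable real-valued, and ∫_E ξ(x)v(x) dx ≥ 0 for every measurable ξ : E → [-1,1] with ∫_E ξ(x)f(x) dx = 0. Then there exists λ ∈ ℝ^n such that v(x) = λ·f(x) for almost every x ∈ E. -/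
/-!
Simple functions form a vector space of bounded measurable test functions containing all
indicators. Rescaling a simple `ξ` with `∫ ξ f = 0` by `±t`, small enough to land in `[-1, 1]`,
shows `∫ ξ v = 0`. So the linear functional `ξ ↦ ∫ ξ v` vanishes on the common kernel of the
functionals `ξ ↦ ∫ ξ f_j` and is therefore a combination `∑ λ_j ∫ ξ f_j`. Testing with
indicators gives `∫_s v = ∫_s λ·f` for every measurable `s`, hence `v = λ·f` a.e.
-/

open MeasureTheory

namespace MeasureTheory.SimpleFunc

variable {α : Type*} [MeasurableSpace α] {μ : Measure α}

theorem integrable_mul (ξ : SimpleFunc α ℝ) {w : α → ℝ} (hw : Integrable w μ) :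
    Integrable (fun x => ξ x * w x) μ :=
  hw.simpleFunc_mul ξ

noncomputable def integralMulLM (μ : Measure α) {w : α → ℝ} (hw : Integrable w μ) :
    SimpleFunc α ℝ →ₗ[ℝ] ℝ where
  toFun ξ := ∫ x, ξ x * w x ∂μ
  map_add' ξ η := by
    simp only [coe_add, Pi.add_apply, add_mul]
    exact MeasureTheory.integral_add (ξ.integrable_mul hw) (η.integrable_mul hw)
  map_smul' c ξ := by
    simp only [coe_smul, Pi.smul_apply, smul_eq_mul, mul_assoc, RingHom.id_apply]
    exact MeasureTheory.integral_const_mul c _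

@[simp]
theorem integralMulLM_apply {w : α → ℝ} (hw : Integrable w μ) (ξ : SimpleFunc α ℝ) :
    integralMulLM μ hw ξ = ∫ x, ξ x * w x ∂μ :=
  rfl

theorem exists_pos_forall_abs_mul_le_one (ξ : SimpleFunc α ℝ) :
    ∃ t > 0, ∀ x, |t * ξ x| ≤ 1 := by
  obtain ⟨C, hC⟩ := ξ.exists_forall_norm_le
  have hC1 : 0 < |C| + 1 := by positivity
  refine ⟨(|C| + 1)⁻¹, inv_pos.2 hC1, fun x => ?_⟩
  rw [abs_mul, abs_of_pos (inv_pos.2 hC1), inv_mul_le_one₀ hC1]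
  linarith [le_abs_self C, (Real.norm_eq_abs _).symm.trans_le (hC x)]

theorem integral_mul_eq_zero_of_forall_Icc_nonneg {F : Type*} [NormedAddCommGroup F]
    [NormedSpace ℝ F] {f : α → F} {v : α → ℝ}
    (hmin : ∀ ξ : α → ℝ, Measurable ξ → (∀ x, ξ x ∈ Set.Icc (-1 : ℝ) 1) →
      (∫ x, ξ x • f x ∂μ) = 0 → 0 ≤ ∫ x, ξ x * v x ∂μ)
    (ξ : SimpleFunc α ℝ) (hξ : ∫ x, ξ x • f x ∂μ = 0) : ∫ x, ξ x * v x ∂μ = 0 := by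
  obtain ⟨t, ht, hξt⟩ := ξ.exists_pos_forall_abs_mul_le_one
  have hscaled : ∀ c, |c| = t → 0 ≤ c * ∫ x, ξ x * v x ∂μ := fun c hc => by
    have hIcc : ∀ x, c * ξ x ∈ Set.Icc (-1 : ℝ) 1 := fun x => by
      rw [Set.mem_Icc, ← abs_le, abs_mul, hc, ← abs_of_pos ht, ← abs_mul]
      exact hξt x
    have hzero : ∫ x, (c * ξ x) • f x ∂μ = 0 := by
      simp_rw [mul_smul]
      rw [MeasureTheory.integral_smul, hξ, smul_zero]
    simpa only [mul_assoc, MeasureTheory.integral_const_mul] using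
      hmin _ (ξ.measurable.const_mul c) hIcc hzero
  have hpos := hscaled t (abs_of_pos ht)
  have hneg := hscaled (-t) (by rw [abs_neg, abs_of_pos ht])
  rw [neg_mul] at hneg
  nlinarith

end MeasureTheory.SimpleFunc

namespace MeasureTheory

variable {α : Type*} [MeasurableSpace α] {μ : Measure α}

theorem exists_integral_mul_eq_sum {ι : Type*} [Fintype ι] {f : α → ι → ℝ} {v : α → ℝ}
    (hf : Integrable f μ) (hv : Integrable v μ)
    (h : ∀ ξ : SimpleFunc α ℝ, ∫ x, ξ x • f x ∂μ = 0 → ∫ x, ξ x * v x ∂μ = 0) :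
    ∃ lam : ι → ℝ, ∀ ξ : SimpleFunc α ℝ,
      ∫ x, ξ x * v x ∂μ = ∑ j, lam j * ∫ x, ξ x * f x j ∂μ := by
  have hker : ⨅ j, LinearMap.ker (SimpleFunc.integralMulLM μ (hf.eval j)) ≤
      LinearMap.ker (SimpleFunc.integralMulLM μ hv) := fun ξ hξ => by
    simp only [Submodule.mem_iInf, LinearMap.mem_ker] at hξ ⊢
    refine h ξ (funext fun j => ?_)
    rw [eval_integral (f := fun x => ξ x • f x) (fun i => ξ.integrable_mul (hf.eval i)) j]
    exact hξ j
  obtain ⟨lam, hlam⟩ :=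
    (Submodule.mem_span_range_iff_exists_fun ℝ).1 (mem_span_of_iInf_ker_le_ker hker)
  exact ⟨lam, fun ξ => by simpa using (LinearMap.congr_fun hlam ξ).symm⟩

theorem ae_eq_of_forall_simpleFunc_integral_mul_eq {v w : α → ℝ}
    (hv : Integrable v μ) (hw : Integrable w μ)
    (h : ∀ ξ : SimpleFunc α ℝ, ∫ x, ξ x * v x ∂μ = ∫ x, ξ x * w x ∂μ) : v =ᵐ[μ] w := by
  refine Integrable.ae_eq_of_forall_setIntegral_eq _ _ hv hw fun s hs _ => ?_
  simpa only [SimpleFunc.coe_restrict _ hs, SimpleFunc.coe_const, ← Set.indicator_mul_left,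
    Function.const_apply, one_mul, integral_indicator hs] using
    h ((SimpleFunc.const α (1 : ℝ)).restrict s)

end MeasureTheory

theorem stmt9_general (d n : ℕ) (E : Set (Fin d → ℝ))
    (f : (Fin d → ℝ) → Fin n → ℝ) (hf : IntegrableOn f E)
    (v : (Fin d → ℝ) → ℝ) (hv : IntegrableOn v E)
    (hmin : ∀ ξ : (Fin d → ℝ) → ℝ, Measurable ξ → (∀ x, ξ x ∈ Set.Icc (-1 : ℝ) 1) →
      (∫ x in E, ξ x • f x) = 0 → 0 ≤ ∫ x in E, ξ x * v x) :
    ∃ lam : Fin n → ℝ, ∀ᵐ x ∂volume.restrict E, v x = ∑ j, lam j * f x j := by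
  obtain ⟨lam, hlam⟩ :=
    exists_integral_mul_eq_sum hf hv fun ξ => ξ.integral_mul_eq_zero_of_forall_Icc_nonneg hmin
  have hfj : ∀ j, Integrable (fun x => lam j * f x j) (volume.restrict E) :=
    fun j => (hf.eval j).const_mul (lam j)
  refine ⟨lam, ae_eq_of_forall_simpleFunc_integral_mul_eq hv
    (integrable_finsetSum _ fun j _ => hfj j) fun ξ => ?_⟩
  simp_rw [hlam ξ, Finset.mul_sum]
  rw [integral_finsetSum _ fun j _ => ξ.integrable_mul (hfj j)]
  simp_rw [mul_left_comm _ (lam _), integral_const_mul]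

/-- Lagrange multiplier lemma: if `ξ ≡ 0` minimizes `∫_E ξ v` over measurable `ξ : E → [-1,1]`
with `∫_E ξ f = 0`, then `v = λ · f` a.e. on `E` for some `λ ∈ ℝ^n`. -/
theorem stmt9 (d n : ℕ) (E : Set (Fin d → ℝ)) (hE : MeasurableSet E)
    (hpos : 0 < volume E) (hfin : volume E < ⊤)
    (f : (Fin d → ℝ) → Fin n → ℝ) (hf : IntegrableOn f E)
    (v : (Fin d → ℝ) → ℝ) (hv : IntegrableOn v E)
    (hmin : ∀ ξ : (Fin d → ℝ) → ℝ, Measurable ξ → (∀ x, ξ x ∈ Set.Icc (-1 : ℝ) 1) →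
      (∫ x in E, ξ x • f x) = 0 → 0 ≤ ∫ x in E, ξ x * v x) :
    ∃ lam : Fin n → ℝ, ∀ᵐ x ∂volume.restrict E, v x = ∑ j, lam j * f x j :=
  stmt9_general d n E f hf v hv hmin
end

section
/- Let K be a compact metric space, w : K → ℝ continuous, g : K → ℝ^n continuous, and N > 0. Suppose that meas{x ∈ K | w(x) = λ·g(x)} < ε for all λ ∈ [-N,N]^n, where meas is a finite Borel measure on K. Then there exists r > 0 such that for all w̃ ∈ C(K,ℝ) with ‖w̃ − w‖_∞ < r and all λ ∈ [-N,N]^n, meas{x ∈ K | w̃(x) = λ·g(x)} < ε. -/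
open MeasureTheory Filter Topology

/-- Openness step of the key lemma: on a compact metric space with a finite Borel measure, if
`meas {x | w x = λ·g x} < ε` for all `λ ∈ [-N,N]^n`, the same holds for every `w̃` uniformly
close to `w`. -/
theorem stmt17 (n : ℕ) (K : Type*) [MetricSpace K] [CompactSpace K] [MeasurableSpace K] [BorelSpace K]
    (μ : Measure K) [IsFiniteMeasure μ]
    (w : C(K, ℝ)) (g : C(K, Fin n → ℝ)) (N : ℝ) (hN : 0 < N) (ε : ℝ)
    (hw : ∀ lam : Fin n → ℝ, (∀ i, lam i ∈ Set.Icc (-N) N) →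
      μ {x | w x = ∑ i, lam i * g x i} < ENNReal.ofReal ε) :
    ∃ r > 0, ∀ w' : C(K, ℝ), ‖w' - w‖ < r →
      ∀ lam : Fin n → ℝ, (∀ i, lam i ∈ Set.Icc (-N) N) →
        μ {x | w' x = ∑ i, lam i * g x i} < ENNReal.ofReal ε := by
  by_contra hcon
  push_neg at hcon
  choose W hW lam hlam hmeas using fun k : ℕ => hcon (1/(k+1)) (by positivity)
  set S : Set (Fin n → ℝ) := Set.univ.pi fun _ => Set.Icc (-N) N with hS
  have hScomp : IsCompact S := isCompact_univ_pi fun _ => isCompact_Icc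
  have hmem : ∀ k, lam k ∈ S := fun k => by
    simp only [hS, Set.mem_univ_pi]; exact hlam k
  obtain ⟨l0, hl0S, φ, hφ, hconv⟩ := hScomp.tendsto_subseq hmem
  have hl0 : ∀ i, l0 i ∈ Set.Icc (-N) N := by
    simpa only [hS, Set.mem_univ_pi] using hl0S
  -- the decreasing family of closed sets
  set A : ℕ → Set K := fun m => {x | |w x - ∑ i, l0 i * g x i| ≤ 1/(m+1)} with hA
  have hfcont : Continuous fun x : K => |w x - ∑ i, l0 i * g x i| := by
    apply Continuous.abs
    exact (map_continuous w).sub (continuous_finset_sum _ fun i _ =>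
      continuous_const.mul ((continuous_apply i).comp (map_continuous g)))
  have hclosed : ∀ m, IsClosed (A m) := fun m =>
    isClosed_le hfcont continuous_const
  have hAnti : Antitone A := by
    intro a b hab x hx
    simp only [hA, Set.mem_setOf_eq] at hx ⊢
    refine le_trans hx ?_
    have hab' : (a:ℝ) ≤ b := by exact_mod_cast hab
    gcongr
  have hInter : (⋂ m, A m) = {x | w x = ∑ i, l0 i * g x i} := by
    ext x
    simp only [Set.mem_iInter, hA, Set.mem_setOf_eq]
    constructor
    · intro h
      have habs : |w x - ∑ i, l0 i * g x i| ≤ 0 := by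
        by_contra hpos
        push_neg at hpos
        obtain ⟨m, hm⟩ := exists_nat_one_div_lt hpos
        exact absurd (h m) (by push_cast; push_cast at hm; linarith)
      have := abs_nonneg (w x - ∑ i, l0 i * g x i)
      have : |w x - ∑ i, l0 i * g x i| = 0 := le_antisymm habs this
      linarith [abs_eq_zero.mp this, sub_eq_zero.mp (abs_eq_zero.mp this)]
    · intro h m
      simp [h]
      positivity
  have htend : Tendsto (fun m => μ (A m)) atTop (𝓝 (μ (⋂ m, A m))) :=
    tendsto_measure_iInter_atTop (fun m => (hclosed m).measurableSet.nullMeasurableSet) hAnti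
      ⟨0, measure_ne_top μ _⟩
  rw [hInter] at htend
  have hev : ∀ᶠ m in atTop, μ (A m) < ENNReal.ofReal ε :=
    htend.eventually_lt_const (hw l0 hl0)
  obtain ⟨m, hm⟩ := hev.exists
  -- convergence of the error term
  set c : ℕ → ℝ := fun k => 1/(φ k+1) + (n:ℝ) * (dist (lam (φ k)) l0 * ‖g‖) with hc
  have hctend : Tendsto c atTop (𝓝 0) := by
    have h1 : Tendsto (fun k => 1/((φ k : ℝ)+1)) atTop (𝓝 0) :=
      tendsto_one_div_add_atTop_nhds_zero_nat.comp (hφ.tendsto_atTop)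
    have h2 : Tendsto (fun k => dist (lam (φ k)) l0) atTop (𝓝 0) :=
      (tendsto_iff_dist_tendsto_zero).mp hconv
    have h3 : Tendsto (fun k => (n:ℝ) * (dist (lam (φ k)) l0 * ‖g‖)) atTop (𝓝 0) := by
      have := (h2.mul_const ‖g‖).const_mul (n:ℝ)
      simpa using this
    have := h1.add h3
    simp only [hc]
    simpa [one_div] using this
  have hck : ∀ᶠ k in atTop, c k < 1/(m+1) := by
    apply hctend.eventually_lt_const
    positivity
  obtain ⟨k, hk⟩ := hck.exists
  -- the inclusion
  have hsub : {x | W (φ k) x = ∑ i, lam (φ k) i * g x i} ⊆ A m := by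
    intro x hx
    simp only [Set.mem_setOf_eq] at hx
    simp only [hA, Set.mem_setOf_eq]
    have h1 : |w x - W (φ k) x| ≤ ‖W (φ k) - w‖ := by
      have := ContinuousMap.norm_coe_le_norm (W (φ k) - w) x
      simpa [abs_sub_comm] using this
    have h2 : |∑ i, lam (φ k) i * g x i - ∑ i, l0 i * g x i|
        ≤ (n:ℝ) * (dist (lam (φ k)) l0 * ‖g‖) := by
      rw [← Finset.sum_sub_distrib]
      calc |∑ i, (lam (φ k) i * g x i - l0 i * g x i)|
          ≤ ∑ i, |lam (φ k) i * g x i - l0 i * g x i| := Finset.abs_sum_le_sum_abs _ _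
        _ ≤ ∑ _i : Fin n, dist (lam (φ k)) l0 * ‖g‖ := by
            apply Finset.sum_le_sum
            intro i _
            rw [← sub_mul, abs_mul]
            apply mul_le_mul
            · have := dist_le_pi_dist (lam (φ k)) l0 i
              simpa [Real.dist_eq] using this
            · calc |g x i| ≤ ‖g x‖ := by
                    simpa using norm_le_pi_norm (g x) i
                _ ≤ ‖g‖ := (g).norm_coe_le_norm x
            · exact abs_nonneg _
            · exact dist_nonneg
        _ = (n:ℝ) * (dist (lam (φ k)) l0 * ‖g‖) := by
            simp [Finset.sum_const, nsmul_eq_mul]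
    calc |w x - ∑ i, l0 i * g x i|
        = |(w x - W (φ k) x) + (∑ i, lam (φ k) i * g x i - ∑ i, l0 i * g x i)| := by
          rw [hx]; ring_nf
      _ ≤ |w x - W (φ k) x| + |∑ i, lam (φ k) i * g x i - ∑ i, l0 i * g x i| := abs_add_le _ _
      _ ≤ ‖W (φ k) - w‖ + (n:ℝ) * (dist (lam (φ k)) l0 * ‖g‖) := add_le_add h1 h2
      _ ≤ c k := by
          have := hW (φ k)
          simp only [hc]
          linarith
      _ ≤ 1/(m+1) := le_of_lt hk
  have : ENNReal.ofReal ε ≤ μ (A m) :=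
    le_trans (hmeas (φ k)) (measure_mono hsub)
  exact absurd (lt_of_le_of_lt this hm) (lt_irrefl _)
end
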